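/- arXiv:2307.02126 — 2 statements merged into one kernel-verified Lean document; each statement's English description precedes it below -/
import Mathlib

section
/- Suppose all data points satisfy x_j = B·e₁. For a two-layer linear GCN class with |w₂| ≤ D, ‖w₁‖₂ ≤ R, aggregation matrix Ā with equal row-neighborhood sums h = Σ_t Ā_{kt} for all k, the empirical Rademacher complexity over m labeled nodes is at least l²·B·D·R·h²/√(2m). -/
/-!
Every node carries the same feature `u = B • e₀` and every row of `Ā` sums to `h`, so the network
outputs `l² h² w₂ ⟪u, w₁⟫` at every node. The supremum over the weights is therefore
`l² h² B D R |ε₁ + ⋯ + εₘ|`, and the bound reduces to Khintchine's `E|ε₁ + ⋯ + εₘ| ≥ √(m / 2)`.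
For that, write `T m = ∑_ε |ε₁ + ⋯ + εₘ|` and `N m` for the number of sign vectors summing to `0`.
Adding one sign gives `T (m + 1) ≥ 2 T m + 2 N m`, and `N (2j) ≥ C(2j, j)`, so
`T (2j) ≥ 2j C(2j, j)` and `T (2j + 1) ≥ 2(2j + 1) C(2j, j)`; the Wallis-type bound
`16^j ≤ 4j C(2j, j)²` then gives `2 (T m)² ≥ m 4^m`.
-/

/-- The Rademacher sign of a boolean: `+1` for `true`, `−1` for `false`. -/
def radSign (b : Bool) : ℝ := if b then 1 else -1

open Finset

theorem Nat.sixteen_pow_le_four_mul_mul_centralBinom_sq {n : ℕ} (hn : 0 < n) :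
    16 ^ n ≤ 4 * n * n.centralBinom ^ 2 := by
  induction n, hn using Nat.le_induction with
  | base => decide
  | succ n hn ih =>
    have hrec := Nat.succ_mul_centralBinom_succ n
    refine Nat.le_of_mul_le_mul_left ?_ (Nat.succ_pos n)
    calc (n + 1) * 16 ^ (n + 1) ≤ 16 * (n + 1) * (4 * n * n.centralBinom ^ 2) := by
          rw [pow_succ]; nlinarith
      _ ≤ 16 * (2 * n + 1) ^ 2 * n.centralBinom ^ 2 := by
          nlinarith [Nat.zero_le (n.centralBinom ^ 2)]
      _ = 4 * ((n + 1) * (n + 1).centralBinom) ^ 2 := by rw [hrec]; ring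
      _ = (n + 1) * (4 * (n + 1) * (n + 1).centralBinom ^ 2) := by ring

def rademacherSum {m : ℕ} (ε : Fin m → Bool) : ℝ := ∑ i, radSign (ε i)

theorem rademacherSum_cons {m : ℕ} (b : Bool) (ε : Fin m → Bool) :
    rademacherSum (Fin.cons b ε : Fin (m + 1) → Bool) = radSign b + rademacherSum ε := by
  simp [rademacherSum, Fin.sum_univ_succ]

theorem two_mul_abs_add_ite_le (s : ℝ) :
    2 * |s| + 2 * (if s = 0 then 1 else 0) ≤ |1 + s| + |-1 + s| := by
  split_ifs with hs
  · norm_num [hs]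
  · have := abs_add_le (1 + s) (-1 + s)
    rw [show 1 + s + (-1 + s) = 2 * s by ring, abs_mul, abs_two] at this
    linarith

theorem two_mul_sum_abs_rademacherSum_add_card_le (m : ℕ) :
    2 * ∑ ε : Fin m → Bool, |rademacherSum ε| + 2 * #{ε : Fin m → Bool | rademacherSum ε = 0}
      ≤ ∑ ε : Fin (m + 1) → Bool, |rademacherSum ε| := by
  rw [← (Fin.consEquiv fun _ ↦ Bool).sum_comp, Fintype.sum_prod_type, Fintype.sum_bool,
    card_filter, Nat.cast_sum, mul_sum, mul_sum, ← sum_add_distrib, ← sum_add_distrib]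
  refine sum_le_sum fun ε _ ↦ ?_
  simpa [Fin.consEquiv, rademacherSum_cons, radSign] using two_mul_abs_add_ite_le (rademacherSum ε)

theorem rademacherSum_decide_mem_eq_zero {j : ℕ} {s : Finset (Fin (2 * j))} (hs : #s = j) :
    rademacherSum (fun i ↦ decide (i ∈ s)) = 0 := by
  simp [rademacherSum, radSign, sum_ite, hs, filter_not, ← compl_eq_univ_sdiff, card_compl, two_mul]

theorem centralBinom_le_card_rademacherSum_eq_zero (j : ℕ) :
    j.centralBinom ≤ #{ε : Fin (2 * j) → Bool | rademacherSum ε = 0} := by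
  calc j.centralBinom = #(powersetCard j (univ : Finset (Fin (2 * j)))) := by
        simp [Nat.centralBinom_eq_two_mul_choose]
    _ ≤ _ := by
      refine card_le_card_of_injOn (fun s i ↦ decide (i ∈ s)) (fun s hs ↦ ?_) fun s _ t _ hst ↦ ?_
      · simp only [coe_filter, mem_univ, true_and, Set.mem_ofPred_eq]
        exact rademacherSum_decide_mem_eq_zero (mem_powersetCard.1 hs).2
      · ext i; simpa using congrFun hst i

theorem two_mul_mul_centralBinom_le_sum_abs_rademacherSum (j : ℕ) :
    2 * j * (j.centralBinom : ℝ) ≤ ∑ ε : Fin (2 * j) → Bool, |rademacherSum ε| := by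
  induction j with
  | zero => simp
  | succ j ih =>
    have hodd := two_mul_sum_abs_rademacherSum_add_card_le (2 * j)
    have heven := two_mul_sum_abs_rademacherSum_add_card_le (2 * j + 1)
    have hcount : (j.centralBinom : ℝ) ≤ #{ε : Fin (2 * j) → Bool | rademacherSum ε = 0} := by
      exact_mod_cast centralBinom_le_card_rademacherSum_eq_zero j
    have hrec : ((j + 1 : ℕ) : ℝ) * (j + 1).centralBinom = 2 * (2 * j + 1) * j.centralBinom := by
      exact_mod_cast Nat.succ_mul_centralBinom_succ j
    push_cast at hrec ⊢
    calc 2 * ((j : ℝ) + 1) * (j + 1).centralBinom = 4 * (2 * j + 1) * j.centralBinom := by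
          linear_combination 2 * hrec
      _ ≤ ∑ ε : Fin (2 * j + 1 + 1) → Bool, |rademacherSum ε| := by
          nlinarith [(0 : ℝ) ≤ #{ε : Fin (2 * j + 1) → Bool | rademacherSum ε = 0}]

theorem two_mul_two_mul_add_one_mul_centralBinom_le_sum_abs_rademacherSum (j : ℕ) :
    2 * (2 * j + 1) * (j.centralBinom : ℝ) ≤ ∑ ε : Fin (2 * j + 1) → Bool, |rademacherSum ε| := by
  have hcount : (j.centralBinom : ℝ) ≤ #{ε : Fin (2 * j) → Bool | rademacherSum ε = 0} := by
    exact_mod_cast centralBinom_le_card_rademacherSum_eq_zero j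
  linarith [two_mul_sum_abs_rademacherSum_add_card_le (2 * j),
    two_mul_mul_centralBinom_le_sum_abs_rademacherSum j]

theorem mul_four_pow_le_two_mul_sq_sum_abs_rademacherSum (m : ℕ) :
    (m : ℝ) * 4 ^ m ≤ 2 * (∑ ε : Fin m → Bool, |rademacherSum ε|) ^ 2 := by
  obtain ⟨j, rfl | rfl⟩ := Nat.even_or_odd' m
  · rcases j.eq_zero_or_pos with rfl | hj
    · rw [mul_zero, Nat.cast_zero, zero_mul]; positivity
    have hbinom : (16 : ℝ) ^ j ≤ 4 * j * j.centralBinom ^ 2 := by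
      exact_mod_cast Nat.sixteen_pow_le_four_mul_mul_centralBinom_sq hj
    calc ((2 * j : ℕ) : ℝ) * 4 ^ (2 * j) = 2 * j * 16 ^ j := by
          rw [pow_mul]; push_cast; norm_num
      _ ≤ 2 * (2 * j * j.centralBinom) ^ 2 := by nlinarith
      _ ≤ _ := by gcongr; exact two_mul_mul_centralBinom_le_sum_abs_rademacherSum j
  · have hbinom : (16 : ℝ) ^ j ≤ (4 * j + 2) * j.centralBinom ^ 2 := by
      rcases j.eq_zero_or_pos with rfl | hj
      · norm_num
      have : (16 : ℝ) ^ j ≤ 4 * j * j.centralBinom ^ 2 := by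
        exact_mod_cast Nat.sixteen_pow_le_four_mul_mul_centralBinom_sq hj
      nlinarith
    calc ((2 * j + 1 : ℕ) : ℝ) * 4 ^ (2 * j + 1) = 4 * (2 * j + 1) * 16 ^ j := by
          rw [pow_succ, pow_mul]; push_cast; norm_num; ring
      _ ≤ 2 * (2 * (2 * j + 1) * j.centralBinom) ^ 2 := by nlinarith
      _ ≤ _ := by
          gcongr
          exact two_mul_two_mul_add_one_mul_centralBinom_le_sum_abs_rademacherSum j

theorem sqrt_half_le_average_abs_rademacherSum (m : ℕ) :
    √(m / 2) ≤ (2 ^ m)⁻¹ * ∑ ε : Fin m → Bool, |rademacherSum ε| := by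
  rw [Real.sqrt_le_left (by positivity), mul_pow, inv_pow, ← pow_mul, pow_mul',
    show (2 : ℝ) ^ 2 = 4 by norm_num, div_le_iff₀ two_pos, inv_mul_eq_div, div_mul_eq_mul_div,
    le_div_iff₀ (by positivity)]
  linarith [mul_four_pow_le_two_mul_sq_sum_abs_rademacherSum m]

theorem sum_radSign_mul_gcn_of_const {m n : ℕ} (A : Matrix (Fin n) (Fin n) ℝ) {h : ℝ}
    (hrow : ∀ k, ∑ t, A k t = h) (f : Fin m → Fin n) (ε : Fin m → Bool) (l w₂ c : ℝ) :
    ∑ i, radSign (ε i) * (l * (w₂ * ∑ v, A (f i) v * (l * ∑ j, A v j * c)))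
      = l ^ 2 * h ^ 2 * rademacherSum ε * w₂ * c := by
  simp only [← sum_mul, hrow, rademacherSum]
  ring

theorem isGreatest_abs_mul_inner {E : Type*} [NormedAddCommGroup E] [InnerProductSpace ℝ E]
    (K : ℝ) (u : E) {D R : ℝ} (hD : 0 ≤ D) (hR : 0 ≤ R) :
    IsGreatest {t : ℝ | ∃ w₁ : E, ∃ w₂ : ℝ, ‖w₁‖ ≤ R ∧ |w₂| ≤ D ∧ t = |K * w₂ * inner ℝ u w₁|}
      (|K| * D * (‖u‖ * R)) := by
  refine ⟨?_, ?_⟩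
  · rcases eq_or_ne u 0 with rfl | hu
    · exact ⟨0, 0, by simpa using hR, by simpa using hD, by simp⟩
    have hu' : ‖u‖ ≠ 0 := norm_ne_zero_iff.2 hu
    refine ⟨(R / ‖u‖) • u, D, ?_, (abs_of_nonneg hD).le, ?_⟩
    · rw [norm_smul, Real.norm_eq_abs, abs_div, abs_norm, abs_of_nonneg hR, div_mul_cancel₀ _ hu']
    · have hinner : inner ℝ u ((R / ‖u‖) • u) = ‖u‖ * R := by
        rw [real_inner_smul_right, real_inner_self_eq_norm_sq]
        field_simp
      rw [hinner, abs_mul, abs_mul, abs_of_nonneg hD, abs_of_nonneg (mul_nonneg (norm_nonneg u) hR)]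
  · rintro t ⟨w₁, w₂, hw₁, hw₂, rfl⟩
    rw [abs_mul, abs_mul]
    gcongr
    exact (abs_real_inner_le_norm u w₁).trans (by gcongr)

theorem empRad_gcn_lower_bound_general (d n m : ℕ) (hd : 0 < d) (hmn : m ≤ n)
    (Abar : Matrix (Fin n) (Fin n) ℝ)
    (h : ℝ) (hrow : ∀ k, ∑ t, Abar k t = h)
    (B l D R : ℝ) (hB : 0 < B) (hD : 0 ≤ D) (hR : 0 ≤ R)
    (x : Fin n → EuclideanSpace ℝ (Fin d))
    (hx : ∀ j, x j = B • EuclideanSpace.single (⟨0, hd⟩ : Fin d) (1 : ℝ)) :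
    ((2 : ℝ) ^ m)⁻¹ * ∑ ε : Fin m → Bool,
        (1 / (m : ℝ)) * sSup {t : ℝ | ∃ w₁ : EuclideanSpace ℝ (Fin d), ∃ w₂ : ℝ,
          ‖w₁‖ ≤ R ∧ |w₂| ≤ D ∧
          t = |∑ i : Fin m, radSign (ε i) *
            (l * (w₂ * ∑ v, Abar (Fin.castLE hmn i) v *
              (l * ∑ j, Abar v j * inner ℝ (x j) w₁)))|} ≥
      l ^ 2 * B * D * R * h ^ 2 / Real.sqrt (2 * m) := by
  simp_rw [hx, sum_radSign_mul_gcn_of_const Abar hrow,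
    (isGreatest_abs_mul_inner _ _ hD hR).csSup_eq]
  have hnorm : ‖B • EuclideanSpace.single (⟨0, hd⟩ : Fin d) (1 : ℝ)‖ = B := by
    simp [norm_smul, hB.le]
  have hsqrt : √(m / 2) / m = 1 / √(2 * m) := by
    rw [← Real.sqrt_div_self', show (2 : ℝ) * m = 2 ^ 2 * (m / 2) by ring,
      Real.sqrt_mul' _ (by positivity), Real.sqrt_sq two_pos.le]
    ring
  calc _ = l ^ 2 * B * D * R * h ^ 2 / m * ((2 ^ m)⁻¹ * ∑ ε : Fin m → Bool, |rademacherSum ε|) := by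
        rw [hnorm, mul_sum, mul_sum, mul_sum]
        refine sum_congr rfl fun ε _ ↦ ?_
        rw [abs_mul, abs_of_nonneg (by positivity : (0 : ℝ) ≤ l ^ 2 * h ^ 2)]
        ring
    _ ≥ l ^ 2 * B * D * R * h ^ 2 / m * √(m / 2) := by
        gcongr
        exact sqrt_half_le_average_abs_rademacherSum m
    _ = l ^ 2 * B * D * R * h ^ 2 / √(2 * m) := by
        rw [mul_comm_div, hsqrt, mul_one_div]

/-- Lower bound on the empirical Rademacher complexity of a two-layer linear GCN
class with aligned data `x_j = B·e₁`, aggregation matrix `Ā` with constant row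
sums `h`, and norm constraints `‖w₁‖ ≤ R`, `|w₂| ≤ D`:
`R̂ ≥ l²·B·D·R·h²/√(2m)`. -/
theorem empRad_gcn_lower_bound (d n m : ℕ) (hd : 0 < d) (hm0 : 0 < m) (hmn : m ≤ n)
    (Abar : Matrix (Fin n) (Fin n) ℝ) (hAnn : ∀ i j, 0 ≤ Abar i j)
    (h : ℝ) (hrow : ∀ k, ∑ t, Abar k t = h)
    (B l D R : ℝ) (hB : 0 < B) (hl : 0 < l) (hD : 0 ≤ D) (hR : 0 ≤ R)
    (x : Fin n → EuclideanSpace ℝ (Fin d))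
    (hx : ∀ j, x j = B • EuclideanSpace.single (⟨0, hd⟩ : Fin d) (1 : ℝ)) :
    ((2 : ℝ) ^ m)⁻¹ * ∑ ε : Fin m → Bool,
        (1 / (m : ℝ)) * sSup {t : ℝ | ∃ w₁ : EuclideanSpace ℝ (Fin d), ∃ w₂ : ℝ,
          ‖w₁‖ ≤ R ∧ |w₂| ≤ D ∧
          t = |∑ i : Fin m, radSign (ε i) *
            (l * (w₂ * ∑ v, Abar (Fin.castLE hmn i) v *
              (l * ∑ j, Abar v j * inner ℝ (x j) w₁)))|} ≥
      l ^ 2 * B * D * R * h ^ 2 / Real.sqrt (2 * m) :=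
  empRad_gcn_lower_bound_general d n m hd hmn Abar h hrow B l D R hB hD hR x hx
end

section
/- Let f : ℝ → ℝ be L-Lipschitz with f(0) = 0 and consider the class G = {x ↦ f(g(x)) : g ∈ F}. Then for fixed points x_1,…,x_m, the empirical Rademacher complexity satisfies R̂(G) ≤ 2L·R̂(F) (Talagrand's contraction lemma in the absolute-value form). -/
/-- Empirical Rademacher complexity (absolute-value form). -/
noncomputable def empRad {X : Type*} (m : ℕ) (x : Fin m → X) (F : Set (X → ℝ)) : ℝ :=
  ((2 : ℝ) ^ m)⁻¹ * ∑ ε : Fin m → Bool,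
    (1 / (m : ℝ)) * sSup {t : ℝ | ∃ g ∈ F, t = |∑ j, radSign (ε j) * g (x j)|}

lemma radSign_abs (b : Bool) : |radSign b| = 1 := by cases b <;> simp [radSign]

lemma radSign_not (b : Bool) : radSign (!b) = - radSign b := by cases b <;> simp [radSign]

lemma key_abstract {ι : Type*} [Nonempty ι] (p q r s : ι → ℝ)
    (hr : BddAbove (Set.range r)) (hs : BddAbove (Set.range s))
    (h1 : ∀ i, p i ≤ max (r i) (s i)) (h2 : ∀ i, q i ≤ max (r i) (s i))
    (h3 : ∀ i j, p i + q j ≤ max (r i + s j) (s i + r j)) :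
    max 0 (sSup (Set.range p)) + max 0 (sSup (Set.range q)) ≤
      max 0 (sSup (Set.range r)) + max 0 (sSup (Set.range s)) := by
  set r' := sSup (Set.range r) with hr'
  set s' := sSup (Set.range s) with hs'
  have hrle : ∀ i, r i ≤ r' := fun i => le_csSup hr ⟨i, rfl⟩
  have hsle : ∀ i, s i ≤ s' := fun i => le_csSup hs ⟨i, rfl⟩
  have hRHS : max 0 (max r' s') ≤ max 0 r' + max 0 s' := by
    apply max_le
    · positivity
    · apply max_le
      · exact le_add_of_le_of_nonneg (le_max_right 0 r') (le_max_left 0 s')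
      · exact le_add_of_nonneg_of_le (le_max_left 0 r') (le_max_right 0 s')
  have hMp : sSup (Set.range p) ≤ max r' s' := by
    apply csSup_le (Set.range_nonempty p)
    rintro _ ⟨i, rfl⟩
    exact (h1 i).trans (max_le_max (hrle i) (hsle i))
  have hMq : sSup (Set.range q) ≤ max r' s' := by
    apply csSup_le (Set.range_nonempty q)
    rintro _ ⟨i, rfl⟩
    exact (h2 i).trans (max_le_max (hrle i) (hsle i))
  by_cases hp : sSup (Set.range p) ≤ 0
  · rw [max_eq_left hp, zero_add]
    exact le_trans (max_le_max (le_refl 0) hMq) hRHS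
  by_cases hq : sSup (Set.range q) ≤ 0
  · rw [max_eq_left hq, add_zero]
    exact le_trans (max_le_max (le_refl 0) hMp) hRHS
  push_neg at hp hq
  rw [max_eq_right hp.le, max_eq_right hq.le]
  have key3 : ∀ i j, p i + q j ≤ r' + s' := fun i j =>
    (h3 i j).trans (max_le (add_le_add (hrle i) (hsle j)) (by linarith [hsle i, hrle j]))
  have hpsum : sSup (Set.range p) ≤ r' + s' - sSup (Set.range q) := by
    apply csSup_le (Set.range_nonempty p)
    rintro _ ⟨i, rfl⟩
    have : sSup (Set.range q) ≤ r' + s' - p i := by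
      apply csSup_le (Set.range_nonempty q)
      rintro _ ⟨j, rfl⟩
      linarith [key3 i j]
    linarith
  have : sSup (Set.range p) + sSup (Set.range q) ≤ r' + s' := by linarith
  exact this.trans (add_le_add (le_max_right 0 r') (le_max_right 0 s'))

lemma key_lip {ι : Type*} [Nonempty ι] (S u : ι → ℝ) (c L : ℝ) (hc : |c| = 1) (hL : 0 ≤ L)
    (f : ℝ → ℝ) (hf : ∀ a b, |f a - f b| ≤ L * |a - b|) (hf0 : f 0 = 0)
    (hr : BddAbove (Set.range fun i => S i + c * (L * u i)))
    (hs : BddAbove (Set.range fun i => S i - c * (L * u i))) :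
    max 0 (sSup (Set.range fun i => S i + c * f (u i))) +
      max 0 (sSup (Set.range fun i => S i - c * f (u i))) ≤
    max 0 (sSup (Set.range fun i => S i + c * (L * u i))) +
      max 0 (sSup (Set.range fun i => S i - c * (L * u i))) := by
  have habsf : ∀ t : ℝ, |f t| ≤ L * |t| := by
    intro t
    have := hf t 0
    simpa [hf0] using this
  have habs1 : ∀ i, |c * f (u i)| ≤ |c * (L * u i)| := by
    intro i
    rw [abs_mul, abs_mul, hc, one_mul, one_mul, abs_mul, abs_of_nonneg hL]
    exact habsf (u i)
  apply key_abstract _ _ _ _ hr hs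
  · intro i
    have h1 : c * f (u i) ≤ |c * (L * u i)| := (le_abs_self _).trans (habs1 i)
    rw [abs_eq_max_neg] at h1
    rcases le_max_iff.mp h1 with h | h
    · exact le_max_of_le_left (by linarith)
    · exact le_max_of_le_right (by linarith)
  · intro i
    have h1 : -(c * f (u i)) ≤ |c * (L * u i)| := (neg_le_abs _).trans (habs1 i)
    rw [abs_eq_max_neg] at h1
    rcases le_max_iff.mp h1 with h | h
    · exact le_max_of_le_left (by linarith)
    · exact le_max_of_le_right (by linarith)
  · intro i j
    have h2 : c * f (u i) - c * f (u j) ≤ |c * (L * (u i - u j))| := by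
      calc c * f (u i) - c * f (u j) = c * (f (u i) - f (u j)) := by ring
        _ ≤ |c * (f (u i) - f (u j))| := le_abs_self _
        _ = |f (u i) - f (u j)| := by rw [abs_mul, hc, one_mul]
        _ ≤ L * |u i - u j| := hf (u i) (u j)
        _ = |c * (L * (u i - u j))| := by
            rw [abs_mul, hc, one_mul, abs_mul, abs_of_nonneg hL]
    rw [abs_eq_max_neg] at h2
    rcases le_max_iff.mp h2 with h | h
    · exact le_max_of_le_left (by nlinarith [h])
    · exact le_max_of_le_right (by nlinarith [h])

noncomputable def hybSum {X : Type*} (m : ℕ) (x : Fin m → X) (L : ℝ) (f : ℝ → ℝ)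
    (k : ℕ) (ε : Fin m → Bool) (g : X → ℝ) : ℝ :=
  ∑ j, radSign (ε j) * (if (j : ℕ) < k then L * g (x j) else f (g (x j)))

noncomputable def Dk {X : Type*} (m : ℕ) (x : Fin m → X) (F : Set (X → ℝ)) (L : ℝ)
    (f : ℝ → ℝ) (k : ℕ) (ε : Fin m → Bool) : ℝ :=
  max 0 (sSup (Set.range fun g : F => hybSum m x L f k ε g.1))

lemma sum_abs_bound {X : Type*} (m : ℕ) (x : Fin m → X) (F : Set (X → ℝ))
    (hbdd : ∀ ε : Fin m → Bool,
      BddAbove {t : ℝ | ∃ g ∈ F, t = |∑ j, radSign (ε j) * g (x j)|}) :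
    ∃ C : ℝ, 0 ≤ C ∧ ∀ g ∈ F, ∑ j, |g (x j)| ≤ C := by
  choose M hM using hbdd
  refine ⟨∑ ε : Fin m → Bool, max 0 (M ε), Finset.sum_nonneg fun ε _ => le_max_left _ _, ?_⟩
  intro g hg
  set σ : Fin m → Bool := fun j => decide (0 ≤ g (x j)) with hσ
  have hterm : ∀ j, radSign (σ j) * g (x j) = |g (x j)| := by
    intro j
    by_cases h : 0 ≤ g (x j)
    · simp [radSign, hσ, h, abs_of_nonneg h]
    · simp [radSign, hσ, h, abs_of_neg (not_le.mp h)]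
  have hsum : ∑ j, |g (x j)| = |∑ j, radSign (σ j) * g (x j)| := by
    rw [abs_of_nonneg]
    · exact Finset.sum_congr rfl fun j _ => (hterm j).symm
    · rw [Finset.sum_congr rfl fun j _ => hterm j]
      exact Finset.sum_nonneg fun j _ => abs_nonneg _
  rw [hsum]
  have hmem : |∑ j, radSign (σ j) * g (x j)| ∈
      {t : ℝ | ∃ g ∈ F, t = |∑ j, radSign (σ j) * g (x j)|} := ⟨g, hg, rfl⟩
  have h1 : |∑ j, radSign (σ j) * g (x j)| ≤ M σ := hM σ hmem
  calc |∑ j, radSign (σ j) * g (x j)| ≤ max 0 (M σ) := h1.trans (le_max_right _ _)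
    _ ≤ ∑ ε : Fin m → Bool, max 0 (M ε) :=
        Finset.single_le_sum (fun ε _ => le_max_left 0 (M ε)) (Finset.mem_univ σ)

lemma hybSum_abs_le {X : Type*} (m : ℕ) (x : Fin m → X) (L : ℝ) (f : ℝ → ℝ)
    (hL : 0 ≤ L) (habsf : ∀ t : ℝ, |f t| ≤ L * |t|)
    (k : ℕ) (ε : Fin m → Bool) (g : X → ℝ) (C : ℝ) (hC : ∑ j, |g (x j)| ≤ C) :
    |hybSum m x L f k ε g| ≤ L * C := by
  calc |hybSum m x L f k ε g|
      ≤ ∑ j, |radSign (ε j) * (if (j : ℕ) < k then L * g (x j) else f (g (x j)))| :=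
        Finset.abs_sum_le_sum_abs _ _
    _ ≤ ∑ j, L * |g (x j)| := by
        apply Finset.sum_le_sum
        intro j _
        rw [abs_mul, radSign_abs, one_mul]
        by_cases h : (j : ℕ) < k
        · simp only [if_pos h, abs_mul, abs_of_nonneg hL]; exact le_refl _
        · simp only [if_neg h]
          exact habsf _
    _ = L * ∑ j, |g (x j)| := by rw [Finset.mul_sum]
    _ ≤ L * C := mul_le_mul_of_nonneg_left hC hL

lemma step_lemma {X : Type*} (m : ℕ) (x : Fin m → X) (F : Set (X → ℝ)) (L : ℝ)
    (f : ℝ → ℝ) (hf : ∀ a b, |f a - f b| ≤ L * |a - b|) (hf0 : f 0 = 0)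
    (hL : 0 ≤ L) (hne : F.Nonempty) (C : ℝ) (hC : ∀ g ∈ F, ∑ j, |g (x j)| ≤ C)
    (k : ℕ) :
    ∑ ε : Fin m → Bool, Dk m x F L f k ε ≤ ∑ ε : Fin m → Bool, Dk m x F L f (k + 1) ε := by
  haveI : Nonempty F := hne.to_subtype
  have habsf : ∀ t : ℝ, |f t| ≤ L * |t| := fun t => by simpa [hf0] using hf t 0
  have hbddAll : ∀ (k' : ℕ) (ε : Fin m → Bool),
      BddAbove (Set.range fun g : F => hybSum m x L f k' ε g.1) := by
    intro k' ε
    refine ⟨L * C, ?_⟩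
    rintro _ ⟨g, rfl⟩
    exact (le_abs_self _).trans (hybSum_abs_le m x L f hL habsf k' ε g.1 C (hC g.1 g.2))
  by_cases hk : m ≤ k
  · apply le_of_eq
    apply Finset.sum_congr rfl
    intro ε _
    have heq : (fun g : F => hybSum m x L f k ε g.1) =
        (fun g : F => hybSum m x L f (k + 1) ε g.1) := by
      funext g
      apply Finset.sum_congr rfl
      intro j _
      have h1 : (j : ℕ) < k := lt_of_lt_of_le j.2 hk
      rw [if_pos h1, if_pos (h1.trans (Nat.lt_succ_self k))]
    unfold Dk
    rw [heq]
  · push_neg at hk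
    set i : Fin m := ⟨k, hk⟩ with hi
    set flip : (Fin m → Bool) → (Fin m → Bool) :=
      fun ε => fun j => if j = i then !(ε j) else ε j with hflip
    have hinv : Function.Involutive flip := by
      intro ε; funext j; by_cases h : j = i <;> simp [hflip, h]
    have sumflip : ∀ G : (Fin m → Bool) → ℝ, ∑ ε, G (flip ε) = ∑ ε, G ε := by
      intro G
      exact Fintype.sum_bijective flip hinv.bijective _ G (fun ε => rfl)
    suffices h2 : ∀ ε, Dk m x F L f k ε + Dk m x F L f k (flip ε) ≤
        Dk m x F L f (k + 1) ε + Dk m x F L f (k + 1) (flip ε) by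
      have h3 := Finset.sum_le_sum (fun ε (_ : ε ∈ Finset.univ) => h2 ε)
      rw [Finset.sum_add_distrib, Finset.sum_add_distrib, sumflip, sumflip] at h3
      linarith
    intro ε
    set S : F → ℝ := fun g =>
      ∑ j ∈ Finset.univ.erase i,
        radSign (ε j) * (if (j : ℕ) < k then L * g.1 (x j) else f (g.1 (x j))) with hS
    set u : F → ℝ := fun g => g.1 (x i) with hu
    set c := radSign (ε i) with hcdef
    have hc : |c| = 1 := radSign_abs _
    have hsplit : ∀ (ε' : Fin m → Bool) (k' : ℕ) (g : F),
        hybSum m x L f k' ε' g.1 =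
          (∑ j ∈ Finset.univ.erase i,
            radSign (ε' j) * (if (j : ℕ) < k' then L * g.1 (x j) else f (g.1 (x j)))) +
          radSign (ε' i) * (if (i : ℕ) < k' then L * u g else f (u g)) := by
      intro ε' k' g
      rw [hybSum, ← Finset.sum_erase_add Finset.univ _ (Finset.mem_univ i)]
    have flip_eq : ∀ (ε' : Fin m → Bool) (j : Fin m), j ≠ i → flip ε' j = ε' j := by
      intro ε' j h; simp [hflip, h]
    have flip_i : ∀ ε' : Fin m → Bool, radSign (flip ε' i) = - radSign (ε' i) := by
      intro ε'; simp [hflip, radSign_not]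
    have hcond : ∀ j : Fin m, j ≠ i → (((j : ℕ) < k + 1) ↔ ((j : ℕ) < k)) := by
      intro j h
      have : (j : ℕ) ≠ k := fun hh => h (Fin.ext hh)
      omega
    have e1 : (fun g : F => hybSum m x L f k ε g.1) = fun g => S g + c * f (u g) := by
      funext g
      rw [hsplit ε k g, if_neg (lt_irrefl k)]
    have e2 : (fun g : F => hybSum m x L f k (flip ε) g.1) = fun g => S g - c * f (u g) := by
      funext g
      rw [hsplit (flip ε) k g, if_neg (lt_irrefl k), flip_i]
      rw [sub_eq_add_neg, neg_mul]
      congr 1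
      apply Finset.sum_congr rfl
      intro j hj
      rw [flip_eq ε j (Finset.ne_of_mem_erase hj)]
    have e3 : (fun g : F => hybSum m x L f (k + 1) ε g.1) =
        fun g => S g + c * (L * u g) := by
      funext g
      rw [hsplit ε (k + 1) g, if_pos (Nat.lt_succ_self k)]
      congr 1
      apply Finset.sum_congr rfl
      intro j hj
      rw [if_congr (hcond j (Finset.ne_of_mem_erase hj)) rfl rfl]
    have e4 : (fun g : F => hybSum m x L f (k + 1) (flip ε) g.1) =
        fun g => S g - c * (L * u g) := by
      funext g
      rw [hsplit (flip ε) (k + 1) g, if_pos (Nat.lt_succ_self k), flip_i]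
      rw [sub_eq_add_neg, neg_mul]
      congr 1
      apply Finset.sum_congr rfl
      intro j hj
      rw [flip_eq ε j (Finset.ne_of_mem_erase hj),
        if_congr (hcond j (Finset.ne_of_mem_erase hj)) rfl rfl]
    have hr : BddAbove (Set.range fun g : F => S g + c * (L * u g)) := by
      rw [← e3]; exact hbddAll (k + 1) ε
    have hs : BddAbove (Set.range fun g : F => S g - c * (L * u g)) := by
      rw [← e4]; exact hbddAll (k + 1) (flip ε)
    show max 0 (sSup (Set.range fun g : F => hybSum m x L f k ε g.1)) +
        max 0 (sSup (Set.range fun g : F => hybSum m x L f k (flip ε) g.1)) ≤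
      max 0 (sSup (Set.range fun g : F => hybSum m x L f (k + 1) ε g.1)) +
        max 0 (sSup (Set.range fun g : F => hybSum m x L f (k + 1) (flip ε) g.1))
    rw [e1, e2, e3, e4]
    exact key_lip S u c L hc hL f hf hf0 hr hs

/-- Talagrand's contraction lemma (absolute-value form): for `L`-Lipschitz `f`
with `f 0 = 0`, the class `G = {f ∘ g : g ∈ F}` satisfies `R̂(G) ≤ 2L·R̂(F)`. -/
theorem contraction_lemma {X : Type*} (m : ℕ) (x : Fin m → X) (F : Set (X → ℝ))
    (L : ℝ) (f : ℝ → ℝ) (hf : ∀ a b, |f a - f b| ≤ L * |a - b|) (hf0 : f 0 = 0)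
    (hne : F.Nonempty)
    (hbdd : ∀ ε : Fin m → Bool,
      BddAbove {t : ℝ | ∃ g ∈ F, t = |∑ j, radSign (ε j) * g (x j)|}) :
    empRad m x ((fun g => f ∘ g) '' F) ≤ 2 * L * empRad m x F := by
  haveI : Nonempty F := hne.to_subtype
  obtain ⟨g₀, hg₀⟩ := hne
  have hL : 0 ≤ L := by
    have h := hf 1 0
    have h2 := abs_nonneg (f 1 - f 0)
    norm_num at h
    linarith
  have habsf : ∀ t : ℝ, |f t| ≤ L * |t| := fun t => by simpa [hf0] using hf t 0
  obtain ⟨C, hC0, hC⟩ := sum_abs_bound m x F hbdd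
  have hbddAll : ∀ (k' : ℕ) (ε : Fin m → Bool),
      BddAbove (Set.range fun g : F => hybSum m x L f k' ε g.1) := by
    intro k' ε
    refine ⟨L * C, ?_⟩
    rintro _ ⟨g, rfl⟩
    exact (le_abs_self _).trans (hybSum_abs_le m x L f hL habsf k' ε g.1 C (hC g.1 g.2))
  set B : (Fin m → Bool) → ℝ :=
    fun ε => sSup {t : ℝ | ∃ g ∈ F, t = |∑ j, radSign (ε j) * g (x j)|} with hB
  set G : (Fin m → Bool) → ℝ :=
    fun ε => sSup {t : ℝ | ∃ g ∈ F, t = |∑ j, radSign (ε j) * f (g (x j))|} with hG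
  have himg : ∀ ε : Fin m → Bool,
      {t : ℝ | ∃ g' ∈ (fun g => f ∘ g) '' F, t = |∑ j, radSign (ε j) * g' (x j)|} =
      {t : ℝ | ∃ g ∈ F, t = |∑ j, radSign (ε j) * f (g (x j))|} := by
    intro ε
    ext t
    constructor
    · rintro ⟨g', ⟨g, hg, rfl⟩, rfl⟩
      exact ⟨g, hg, rfl⟩
    · rintro ⟨g, hg, rfl⟩
      exact ⟨f ∘ g, ⟨g, hg, rfl⟩, rfl⟩
  -- the core inequality on plain sums
  have main : ∑ ε : Fin m → Bool, G ε ≤ 2 * L * ∑ ε : Fin m → Bool, B ε := by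
    set neg : (Fin m → Bool) → (Fin m → Bool) := fun ε j => !(ε j) with hneg
    have hninv : Function.Involutive neg := fun ε => funext fun j => Bool.not_not _
    have sumneg : ∀ H : (Fin m → Bool) → ℝ, ∑ ε, H (neg ε) = ∑ ε, H ε := fun H =>
      Fintype.sum_bijective neg hninv.bijective _ H (fun ε => rfl)
    have claim1 : ∀ ε, G ε ≤ Dk m x F L f 0 ε + Dk m x F L f 0 (neg ε) := by
      intro ε
      show sSup {t : ℝ | ∃ g ∈ F, t = |∑ j, radSign (ε j) * f (g (x j))|} ≤ _
      apply csSup_le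
      · exact ⟨_, g₀, hg₀, rfl⟩
      rintro t ⟨g, hg, rfl⟩
      have hkey : ∀ ε' : Fin m → Bool,
          (∑ j, radSign (ε' j) * f (g (x j))) = hybSum m x L f 0 ε' g := by
        intro ε'
        apply Finset.sum_congr rfl
        intro j _
        rw [if_neg (Nat.not_lt_zero _)]
      have h1 : (∑ j, radSign (ε j) * f (g (x j))) ≤ Dk m x F L f 0 ε := by
        rw [hkey]
        exact le_trans (le_csSup (hbddAll 0 ε) ⟨⟨g, hg⟩, rfl⟩) (le_max_right _ _)
      have h2 : -(∑ j, radSign (ε j) * f (g (x j))) ≤ Dk m x F L f 0 (neg ε) := by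
        have hneq : -(∑ j, radSign (ε j) * f (g (x j))) =
            ∑ j, radSign (neg ε j) * f (g (x j)) := by
          rw [← Finset.sum_neg_distrib]
          apply Finset.sum_congr rfl
          intro j _
          rw [show neg ε j = !(ε j) from rfl, radSign_not, neg_mul]
        rw [hneq, hkey]
        exact le_trans (le_csSup (hbddAll 0 (neg ε)) ⟨⟨g, hg⟩, rfl⟩) (le_max_right _ _)
      have h0a : (0:ℝ) ≤ Dk m x F L f 0 ε := le_max_left _ _
      have h0b : (0:ℝ) ≤ Dk m x F L f 0 (neg ε) := le_max_left _ _
      rw [abs_eq_max_neg]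
      exact max_le (by linarith) (by linarith)
    have claim3 : ∀ ε, Dk m x F L f m ε ≤ L * B ε := by
      intro ε
      have hBnn : 0 ≤ B ε :=
        le_trans (abs_nonneg _) (le_csSup (hbdd ε) ⟨g₀, hg₀, rfl⟩)
      apply max_le (mul_nonneg hL hBnn)
      apply csSup_le (Set.range_nonempty _)
      rintro _ ⟨g, rfl⟩
      have : hybSum m x L f m ε g.1 = L * ∑ j, radSign (ε j) * g.1 (x j) := by
        rw [Finset.mul_sum]
        apply Finset.sum_congr rfl
        intro j _
        rw [if_pos j.2]
        ring
      dsimp only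
      rw [this]
      exact mul_le_mul_of_nonneg_left
        ((le_abs_self _).trans (le_csSup (hbdd ε) ⟨g.1, g.2, rfl⟩)) hL
    have mono : ∀ n : ℕ, ∑ ε : Fin m → Bool, Dk m x F L f 0 ε ≤
        ∑ ε : Fin m → Bool, Dk m x F L f n ε := by
      intro n
      induction n with
      | zero => exact le_refl _
      | succ n ih => exact ih.trans (step_lemma m x F L f hf hf0 hL ⟨g₀, hg₀⟩ C hC n)
    calc ∑ ε : Fin m → Bool, G ε
        ≤ ∑ ε : Fin m → Bool, (Dk m x F L f 0 ε + Dk m x F L f 0 (neg ε)) :=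
          Finset.sum_le_sum fun ε _ => claim1 ε
      _ = 2 * ∑ ε : Fin m → Bool, Dk m x F L f 0 ε := by
          rw [Finset.sum_add_distrib, sumneg]; ring
      _ ≤ 2 * ∑ ε : Fin m → Bool, Dk m x F L f m ε := by linarith [mono m]
      _ ≤ 2 * ∑ ε : Fin m → Bool, (L * B ε) := by
          have := Finset.sum_le_sum fun ε (_ : ε ∈ Finset.univ) => claim3 ε
          linarith
      _ = 2 * L * ∑ ε : Fin m → Bool, B ε := by rw [← Finset.mul_sum]; ring
  -- assembly
  unfold empRad
  have hrw : (∑ ε : Fin m → Bool, (1 / (m : ℝ)) *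
      sSup {t : ℝ | ∃ g ∈ (fun g => f ∘ g) '' F, t = |∑ j, radSign (ε j) * g (x j)|}) =
      ∑ ε : Fin m → Bool, (1 / (m : ℝ)) * G ε := by
    apply Finset.sum_congr rfl
    intro ε _
    rw [himg ε]
  rw [hrw]
  have hrw2 : (∑ ε : Fin m → Bool, (1 / (m : ℝ)) *
      sSup {t : ℝ | ∃ g ∈ F, t = |∑ j, radSign (ε j) * g (x j)|}) =
      ∑ ε : Fin m → Bool, (1 / (m : ℝ)) * B ε := rfl
  rw [hrw2, ← Finset.mul_sum, ← Finset.mul_sum]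
  have hm : (0:ℝ) ≤ 1 / (m : ℝ) := by positivity
  have h2m : (0:ℝ) ≤ ((2:ℝ) ^ m)⁻¹ := by positivity
  have h4 : ((2:ℝ) ^ m)⁻¹ * ((1 / (m : ℝ)) * ∑ ε : Fin m → Bool, G ε) ≤
      ((2:ℝ) ^ m)⁻¹ * ((1 / (m : ℝ)) * (2 * L * ∑ ε : Fin m → Bool, B ε)) :=
    mul_le_mul_of_nonneg_left (mul_le_mul_of_nonneg_left main hm) h2m
  calc ((2:ℝ) ^ m)⁻¹ * ((1 / (m : ℝ)) * ∑ ε : Fin m → Bool, G ε)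
      ≤ ((2:ℝ) ^ m)⁻¹ * ((1 / (m : ℝ)) * (2 * L * ∑ ε : Fin m → Bool, B ε)) := h4
    _ = 2 * L * (((2:ℝ) ^ m)⁻¹ * ((1 / (m : ℝ)) * ∑ ε : Fin m → Bool, B ε)) := by ring
end
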